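/- Let G be a beer graph with beer-store set B, let u, v be vertices and let S be a set of vertices such that every walk in G from u to v visits at least one vertex of S. Then dist_B(u,v) = ⨅_{w ∈ S} min( dist_B(u,w) + dist(w,v) , dist(u,w) + dist_B(w,v) ), the infimum taken in ℝ≥0∞. -/

import Mathlib

/-!
Appending a walk to a beer walk gives a beer walk, which bounds `dist_B(u,v)` by each term of
the infimum. Conversely, a beer walk from `u` to `v` passes through some `s ∈ S`; cutting it at `s`
puts the beer store on one of the two pieces, so its weight dominates the term for `s`.
-/

open scoped ENNReal

/-- The weight of a walk: the sum, with multiplicity, of the weights of its edges. -/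
noncomputable def walkWeight {V : Type*} (ω : V → V → ℝ≥0∞) {G : SimpleGraph V}
    {u v : V} (p : G.Walk u v) : ℝ≥0∞ :=
  (p.darts.map fun d => ω d.toProd.1 d.toProd.2).sum

/-- The (weighted) distance: the infimum in ℝ≥0∞ of the weights of all walks. -/
noncomputable def gDist {V : Type*} (G : SimpleGraph V) (ω : V → V → ℝ≥0∞) (u v : V) : ℝ≥0∞ :=
  ⨅ p : G.Walk u v, walkWeight ω p

/-- The beer distance: the infimum in ℝ≥0∞ of the weights of all walks visiting
a vertex of `B`. -/
noncomputable def beerDist {V : Type*} (G : SimpleGraph V) (ω : V → V → ℝ≥0∞)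
    (B : Set V) (u v : V) : ℝ≥0∞ :=
  ⨅ (p : G.Walk u v) (_ : ∃ b ∈ B, b ∈ p.support), walkWeight ω p

open SimpleGraph

section

variable {V : Type*} {G : SimpleGraph V} (ω : V → V → ℝ≥0∞) (B : Set V)

lemma walkWeight_append {u v w : V} (p : G.Walk u v) (q : G.Walk v w) :
    walkWeight ω (p.append q) = walkWeight ω p + walkWeight ω q := by
  simp [walkWeight, Walk.darts_append]

lemma gDist_le_walkWeight {u v : V} (p : G.Walk u v) : gDist G ω u v ≤ walkWeight ω p :=
  iInf_le _ p

lemma beerDist_le_walkWeight {u v b : V} (p : G.Walk u v) (hb : b ∈ B) (hbp : b ∈ p.support) :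
    beerDist G ω B u v ≤ walkWeight ω p :=
  iInf₂_le p ⟨b, hb, hbp⟩

lemma beerDist_eq_iInf_subtype (u v : V) :
    beerDist G ω B u v =
      ⨅ p : {p : G.Walk u v // ∃ b ∈ B, b ∈ p.support}, walkWeight ω p.1 :=
  iInf_subtype'

lemma beerDist_le_beerDist_add_gDist (u w v : V) :
    beerDist G ω B u v ≤ beerDist G ω B u w + gDist G ω w v := by
  rw [beerDist_eq_iInf_subtype ω B u w]
  refine ENNReal.le_iInf_add_iInf fun ⟨q, b, hb, hbq⟩ r => ?_
  rw [← walkWeight_append]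
  exact beerDist_le_walkWeight ω B _ hb ((Walk.mem_support_append_iff q r).2 (.inl hbq))

lemma beerDist_le_gDist_add_beerDist (u w v : V) :
    beerDist G ω B u v ≤ gDist G ω u w + beerDist G ω B w v := by
  rw [beerDist_eq_iInf_subtype ω B w v]
  refine ENNReal.le_iInf_add_iInf fun q ⟨r, b, hb, hbr⟩ => ?_
  rw [← walkWeight_append]
  exact beerDist_le_walkWeight ω B _ hb ((Walk.mem_support_append_iff q r).2 (.inr hbr))

lemma min_beerDist_add_gDist_le_walkWeight {u v s b : V} (p : G.Walk u v) (hs : s ∈ p.support)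
    (hb : b ∈ B) (hbp : b ∈ p.support) :
    min (beerDist G ω B u s + gDist G ω s v) (gDist G ω u s + beerDist G ω B s v) ≤
      walkWeight ω p := by
  classical
  rw [← p.take_spec hs] at hbp ⊢
  rw [walkWeight_append]
  rcases (Walk.mem_support_append_iff _ _).1 hbp with hbq | hbr
  · exact min_le_left _ _ |>.trans <| add_le_add
      (beerDist_le_walkWeight ω B _ hb hbq) (gDist_le_walkWeight ω _)
  · exact min_le_right _ _ |>.trans <| add_le_add
      (gDist_le_walkWeight ω _) (beerDist_le_walkWeight ω B _ hb hbr)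

end

theorem beerDist_eq_iInf_through_separator_general {V : Type*}
    (G : SimpleGraph V) (ω : V → V → ℝ≥0∞) (B : Set V)
    (u v : V) (S : Set V)
    (hS : ∀ p : G.Walk u v, ∃ s ∈ S, s ∈ p.support) :
    beerDist G ω B u v =
      ⨅ w ∈ S, min (beerDist G ω B u w + gDist G ω w v)
                   (gDist G ω u w + beerDist G ω B w v) := by
  refine le_antisymm (le_iInf₂ fun w _ => le_min ?_ ?_) (le_iInf₂ fun p ⟨b, hb, hbp⟩ => ?_)
  · exact beerDist_le_beerDist_add_gDist ω B u w v
  · exact beerDist_le_gDist_add_beerDist ω B u w v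
  · obtain ⟨s, hsS, hsp⟩ := hS p
    exact (iInf₂_le s hsS).trans (min_beerDist_add_gDist_le_walkWeight ω B p hsp hb hbp)

/-- If every walk from u to v visits a vertex of S, then
dist_B(u,v) = ⨅_{w ∈ S} min( dist_B(u,w) + dist(w,v), dist(u,w) + dist_B(w,v) ). -/
theorem beerDist_eq_iInf_through_separator {V : Type*} [Fintype V] [DecidableEq V]
    (G : SimpleGraph V) (ω : V → V → ℝ≥0∞) (B : Set V)
    (hsymm : ∀ a b, ω a b = ω b a)
    (hpos : ∀ a b, G.Adj a b → 0 < ω a b ∧ ω a b < ⊤)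
    (u v : V) (S : Set V)
    (hS : ∀ p : G.Walk u v, ∃ s ∈ S, s ∈ p.support) :
    beerDist G ω B u v =
      ⨅ w ∈ S, min (beerDist G ω B u w + gDist G ω w v)
                   (gDist G ω u w + beerDist G ω B w v) :=
  beerDist_eq_iInf_through_separator_general G ω B u v S hS
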